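/- arXiv:1910.09820 — 2 statements merged into one kernel-verified Lean document; each statement's English description precedes it below -/
import Mathlib

section
/- Let n ≥ 2 be an integer and t₁ > 1. Suppose m : [1,∞) → ℝ is a continuous function satisfying −m(t) − (1/(n-1)) ∫₁ᵗ m(s)² ds ≥ 2 for all t ≥ t₁. Define the sequence t_ℓ by t_{ℓ+1} = t_ℓ + (n-1)·2^{1−ℓ} for ℓ ≥ 1. Then for every integer ℓ ≥ 1, −m(t) ≥ 2^ℓ for all t ≥ t_ℓ. -/
/-!
On `[t_ℓ, ∞)` we have `-m ≥ 2^ℓ`, so the integral of `m²` over `[t_ℓ, t_{ℓ+1}]` is at least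
`(n-1)·2^{1-ℓ}·4^ℓ = (n-1)·2^{ℓ+1}`; plugged into the hypothesis (the integral over `[1, t_ℓ]`
being nonnegative) this doubles the lower bound on `-m` beyond `t_{ℓ+1}`.
-/

open Set MeasureTheory intervalIntegral

namespace RiccatiBlowup

variable {m : ℝ → ℝ} {a : ℝ}

lemma intervalIntegrable_sq (hm : ContinuousOn m (Ici a)) {b c : ℝ} (hb : a ≤ b) (hc : a ≤ c) :
    IntervalIntegrable (fun s => m s ^ 2) volume b c :=
  ((hm.pow 2).mono fun _ hx => le_trans (le_min hb hc) hx.1).intervalIntegrable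

lemma mul_sq_le_integral_sq (hm : ContinuousOn m (Ici a)) {b t M : ℝ} (hab : a ≤ b)
    (hbt : b ≤ t) (hM : 0 ≤ M) (hbound : ∀ s ∈ Icc b t, M ≤ |m s|) :
    (t - b) * M ^ 2 ≤ ∫ s in a..t, m s ^ 2 := by
  have hat : a ≤ t := hab.trans hbt
  rw [← integral_add_adjacent_intervals (intervalIntegrable_sq hm le_rfl hab)
    (intervalIntegrable_sq hm hab hat)]
  have hhead : 0 ≤ ∫ s in a..b, m s ^ 2 := integral_nonneg hab fun s _ => sq_nonneg (m s)
  have htail : ∫ _ in b..t, M ^ 2 ≤ ∫ s in b..t, m s ^ 2 :=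
    integral_mono_on hbt intervalIntegrable_const (intervalIntegrable_sq hm hab hat)
      fun s hs => sq_abs (m s) ▸ pow_le_pow_left₀ hM (hbound s hs) 2
  rw [intervalIntegral.integral_const, smul_eq_mul] at htail
  linarith

lemma two_le_neg {c t : ℝ} (hc : 0 ≤ c) (h1t : 1 ≤ t)
    (h : 2 ≤ -m t - 1 / c * ∫ s in (1:ℝ)..t, m s ^ 2) : 2 ≤ -m t := by
  have : 0 ≤ 1 / c * ∫ s in (1:ℝ)..t, m s ^ 2 :=
    mul_nonneg (by positivity) (integral_nonneg h1t fun s _ => sq_nonneg (m s))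
  linarith

lemma add_div_mul_sq_le_neg (hm : ContinuousOn m (Ici 1)) {b c M t : ℝ} (hc : 0 ≤ c)
    (h1b : 1 ≤ b) (hbt : b ≤ t) (h : 2 ≤ -m t - 1 / c * ∫ s in (1:ℝ)..t, m s ^ 2)
    (hM : 0 ≤ M) (hbound : ∀ s ∈ Icc b t, M ≤ -m s) :
    2 + (t - b) / c * M ^ 2 ≤ -m t := by
  have hint := mul_sq_le_integral_sq hm h1b hbt hM fun s hs => (hbound s hs).trans (neg_le_abs _)
  calc 2 + (t - b) / c * M ^ 2 = 2 + 1 / c * ((t - b) * M ^ 2) := by ring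
    _ ≤ 2 + 1 / c * ∫ s in (1:ℝ)..t, m s ^ 2 := by gcongr
    _ ≤ -m t := by linarith

lemma two_zpow_one_sub_mul_sq (ℓ : ℕ) :
    (2 : ℝ) ^ ((1 : ℤ) - ℓ) * ((2 : ℝ) ^ ℓ) ^ 2 = 2 ^ (ℓ + 1) := by
  rw [← zpow_natCast _ (ℓ + 1), ← zpow_natCast _ ℓ, ← zpow_natCast _ 2, ← zpow_mul,
    ← zpow_add₀ two_ne_zero]
  congr 1
  push_cast
  ring

end RiccatiBlowup

open RiccatiBlowup in
/-- **Blow-up iteration.** If a continuous `m : [1,∞) → ℝ` satisfies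
`-m(t) - (1/(n-1)) ∫₁ᵗ m(s)² ds ≥ 2` for all `t ≥ t₁ > 1`, and
`t_{ℓ+1} = t_ℓ + (n-1)·2^{1-ℓ}`, then `-m(t) ≥ 2^ℓ` for all `t ≥ t_ℓ`. -/
theorem riccati_blowup_iteration
    (n : ℕ) (hn : 2 ≤ n) (t₁ : ℝ) (ht₁ : 1 < t₁)
    (m : ℝ → ℝ) (hm : ContinuousOn m (Set.Ici 1))
    (hineq : ∀ t ≥ t₁,
      2 ≤ -m t - (1 / ((n : ℝ) - 1)) * ∫ s in (1:ℝ)..t, (m s) ^ 2)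
    (tseq : ℕ → ℝ) (htseq₁ : tseq 1 = t₁)
    (htseq : ∀ ℓ : ℕ, 1 ≤ ℓ →
      tseq (ℓ + 1) = tseq ℓ + ((n : ℝ) - 1) * (2 : ℝ) ^ ((1 : ℤ) - (ℓ : ℤ))) :
    ∀ ℓ : ℕ, 1 ≤ ℓ → ∀ t ≥ tseq ℓ, (2 : ℝ) ^ ℓ ≤ -m t := by
  have hc : (0 : ℝ) < n - 1 := by
    have : (2 : ℝ) ≤ n := by exact_mod_cast hn
    linarith
  have hgap_pos (ℓ : ℕ) : 0 < ((n : ℝ) - 1) * (2 : ℝ) ^ ((1 : ℤ) - ℓ) :=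
    mul_pos hc (zpow_pos two_pos _)
  have ht₁_le : ∀ ℓ ≥ 1, t₁ ≤ tseq ℓ := by
    intro ℓ hℓ
    induction ℓ, hℓ using Nat.le_induction with
    | base => exact htseq₁.ge
    | succ ℓ hℓ ih => linarith [htseq ℓ hℓ, hgap_pos ℓ]
  intro ℓ hℓ
  induction ℓ, hℓ using Nat.le_induction with
  | base =>
    intro t ht
    rw [pow_one]
    exact two_le_neg hc.le (by linarith) (hineq t (htseq₁ ▸ ht))
  | succ ℓ hℓ ih =>
    intro t ht
    rw [htseq ℓ hℓ] at ht
    have hb := ht₁_le ℓ hℓ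
    have hbt : tseq ℓ ≤ t := by linarith [hgap_pos ℓ]
    have hgap : (2 : ℝ) ^ ((1 : ℤ) - ℓ) ≤ (t - tseq ℓ) / (n - 1) := by
      rw [le_div_iff₀ hc]; linarith
    calc (2 : ℝ) ^ (ℓ + 1) = 2 ^ ((1 : ℤ) - ℓ) * ((2 : ℝ) ^ ℓ) ^ 2 :=
          (two_zpow_one_sub_mul_sq ℓ).symm
      _ ≤ (t - tseq ℓ) / (n - 1) * ((2 : ℝ) ^ ℓ) ^ 2 := by gcongr
      _ ≤ 2 + (t - tseq ℓ) / (n - 1) * ((2 : ℝ) ^ ℓ) ^ 2 := le_add_of_nonneg_left two_pos.le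
      _ ≤ -m t := add_div_mul_sq_le_neg hm hc.le (by linarith) hbt (hineq t (hb.trans hbt))
          (by positivity) fun s hs => ih s hs.1
end

section
/- Let n ≥ 2 be an integer and t₁ > 1. There is no continuous function m : [1,∞) → ℝ satisfying −m(t) − (1/(n-1)) ∫₁ᵗ m(s)² ds ≥ 2 for all t ≥ t₁. -/
/-! Put `u t = 2 + (1 / (n - 1)) ∫₁ᵗ m²`. The inequality says `0 < u ≤ -m` on `[t₁, ∞)`, so
`u' = m² / (n - 1) ≥ u² / (n - 1)`: `u` is a supersolution of a Riccati equation. Then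
`t / (n - 1) + 1 / u t` is nonincreasing, which forces the positive quantity `1 / u` to vanish
before time `t₁ + (n - 1) / u t₁`. -/

open Set

theorem false_of_sq_le_mul_deriv_on_Ici {u u' : ℝ → ℝ} {c t₁ : ℝ} (hc : 0 < c)
    (hu : ∀ t ≥ t₁, HasDerivAt u (u' t) t) (hpos : ∀ t ≥ t₁, 0 < u t)
    (hric : ∀ t ≥ t₁, u t ^ 2 ≤ c * u' t) : False := by
  set w : ℝ → ℝ := fun t => t / c + (u t)⁻¹
  have hw : ∀ t ≥ t₁, HasDerivAt w (1 / c - u' t / u t ^ 2) t := fun t ht =>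
    (((hasDerivAt_id t).div_const c).add ((hu t ht).inv (hpos t ht).ne')).congr_deriv
      (by rw [neg_div, ← sub_eq_add_neg])
  have hw_anti : AntitoneOn w (Ici t₁) := by
    refine antitoneOn_of_hasDerivWithinAt_nonpos (convex_Ici t₁)
      (HasDerivAt.continuousOn hw) (fun t ht => (hw t (interior_subset ht)).hasDerivWithinAt) ?_
    intro t ht
    have ht : t₁ ≤ t := interior_subset ht
    have hu2 : 0 < u t ^ 2 := pow_pos (hpos t ht) 2
    rw [sub_nonpos, div_le_div_iff₀ hc hu2]
    linarith [hric t ht]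
  set T := t₁ + c / u t₁
  have hT : t₁ ≤ T := le_add_of_nonneg_right (div_pos hc (hpos t₁ le_rfl)).le
  have hwT : w T ≤ w t₁ := hw_anti (mem_Ici.2 le_rfl) hT hT
  have hwt₁ : w t₁ = T / c := by
    simp only [w, T]
    field_simp
  have : 0 < (u T)⁻¹ := inv_pos.2 (hpos T hT)
  simp only [w] at hwT
  linarith

theorem hasDerivAt_integral_of_continuousOn_Ici {f : ℝ → ℝ} {a t : ℝ} (hf : ContinuousOn f (Ici a))
    (ht : a < t) : HasDerivAt (fun x => ∫ s in a..x, f s) (f t) t :=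
  intervalIntegral.integral_hasDerivAt_right
    (hf.mono Icc_subset_Ici_self |>.intervalIntegrable_of_Icc ht.le)
    ((hf.mono Ioi_subset_Ici_self).stronglyMeasurableAtFilter isOpen_Ioi t ht)
    (hf.continuousAt (Ici_mem_nhds ht))

theorem not_forall_le_neg_sub_integral_sq {m : ℝ → ℝ} {a t₁ c δ : ℝ} (hm : ContinuousOn m (Ici a))
    (ht₁ : a < t₁) (hc : 0 < c) (hδ : 0 < δ) :
    ¬ ∀ t ≥ t₁, δ ≤ -m t - (1 / c) * ∫ s in a..t, m s ^ 2 := by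
  intro h
  set u : ℝ → ℝ := fun t => δ + (1 / c) * ∫ s in a..t, m s ^ 2
  have hu_pos : ∀ t ≥ t₁, 0 < u t := fun t ht =>
    add_pos_of_pos_of_nonneg hδ (mul_nonneg (one_div_nonneg.2 hc.le)
      (intervalIntegral.integral_nonneg (ht₁.le.trans ht) fun s _ => sq_nonneg (m s)))
  refine false_of_sq_le_mul_deriv_on_Ici hc (u' := fun t => (1 / c) * m t ^ 2) (fun t ht => ?_)
    hu_pos fun t ht => ?_
  · exact ((hasDerivAt_integral_of_continuousOn_Ici (hm.pow 2) (ht₁.trans_le ht)).const_mul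
      (1 / c)).const_add δ
  · have hu_le : u t ≤ -m t := by linarith [h t ht]
    rw [← mul_assoc, mul_one_div_cancel hc.ne', one_mul, ← neg_sq (m t)]
    exact pow_le_pow_left₀ (hu_pos t ht).le hu_le 2

/-- **No continuous solution of the strong Riccati-type inequality.** For `n ≥ 2`
and `t₁ > 1`, there is no continuous `m : [1,∞) → ℝ` with
`-m(t) - (1/(n-1)) ∫₁ᵗ m(s)² ds ≥ 2` for all `t ≥ t₁`. -/
theorem no_continuous_solution_riccati_two
    (n : ℕ) (hn : 2 ≤ n) (t₁ : ℝ) (ht₁ : 1 < t₁) :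
    ¬ ∃ m : ℝ → ℝ, ContinuousOn m (Set.Ici 1) ∧
      ∀ t ≥ t₁, 2 ≤ -m t - (1 / ((n : ℝ) - 1)) * ∫ s in (1:ℝ)..t, (m s) ^ 2 := by
  rintro ⟨m, hm, h⟩
  exact not_forall_le_neg_sub_integral_sq hm ht₁ (sub_pos.2 (Nat.one_lt_cast.2 hn)) two_pos h
end
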